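/- arXiv:1710.05892 — 4 statements merged into one kernel-verified Lean document; each statement's English description precedes it below -/
import Mathlib

section
/- Let m, n be positive integers and let R₀, R₁ be positive semidefinite complex (mn)×(mn) matrices such that R₀ + R₁ = S ⊗ T (Kronecker product), where S is a positive semidefinite m×m matrix of rank 1 and T is a positive semidefinite n×n matrix. Then there exist positive semidefinite n×n matrices T₀, T₁ such that Rⱼ = S ⊗ Tⱼ for j = 0, 1. -/
/-!
A positive semidefinite rank-one `S` is `d • c̄ cᵀ` with `d > 0` and `c i₀ = 1`, so its kernel is
spanned by the vectors `eⱼ - cⱼ e_{i₀}`. Tensored with any `e_b` these lie in the kernel of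
`S ⊗ T = R₀ + R₁`, hence in the kernels of both positive semidefinite summands. Thus every column
`(j, b)` of `Rₖ` is `cⱼ` times its column `(i₀, b)`; by hermiticity the same holds for rows, so
`Rₖ = c̄ cᵀ ⊗ Rₖ[i₀, i₀] = S ⊗ (d⁻¹ Rₖ[i₀, i₀])`, and a compression of `Rₖ` is positive semidefinite.
-/

open Matrix Kronecker ComplexOrder

namespace Matrix

variable {m n : Type*}

theorem mul_mul_eq_mul_mul_of_rank_le_one [Fintype n] {K : Type*} [Field K] {A : Matrix m n K}
    (hA : A.rank ≤ 1) (i k : m) (j l : n) : A i j * A k l = A i l * A k j := by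
  by_contra hne
  have hdet : (A.submatrix ![i, k] ![j, l]).det ≠ 0 := by
    rw [det_fin_two]
    simpa [sub_eq_zero] using hne
  have h2 := (A.submatrix ![i, k] ![j, l]).rank_of_isUnit
    ((isUnit_iff_isUnit_det _).mpr hdet.isUnit)
  have := A.rank_submatrix_le ![i, k] ![j, l]
  simp only [h2, Fintype.card_fin] at this
  omega

theorem IsHermitian.eq_vecMulVec_kronecker_submatrix {α : Type*} [CommRing α] [StarRing α]
    {R : Matrix (m × n) (m × n) α} (hR : R.IsHermitian) {c : m → α} {i₀ : m}
    (hcol : ∀ i a j b, R (i, a) (j, b) = c j * R (i, a) (i₀, b)) :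
    R = vecMulVec (star c) c ⊗ₖ R.submatrix (i₀, ·) (i₀, ·) := by
  ext ⟨i, a⟩ ⟨j, b⟩
  have hrow : R (i, a) (i₀, b) = star (c i) * R (i₀, a) (i₀, b) := by
    rw [← hR.apply (i, a) (i₀, b), hcol, star_mul', hR.apply]
  rw [hcol, hrow]
  simp only [kroneckerMap_apply, vecMulVec_apply, Pi.star_apply, submatrix_apply]
  ring

variable [Fintype m] [Fintype n] {𝕜 : Type*} [RCLike 𝕜]

theorem PosSemidef.mulVec_eq_zero_of_add_mulVec_eq_zero {A B : Matrix n n 𝕜}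
    (hA : A.PosSemidef) (hB : B.PosSemidef) {x : n → 𝕜} (h : (A + B) *ᵥ x = 0) :
    A *ᵥ x = 0 := by
  have hsum : star x ⬝ᵥ A *ᵥ x + star x ⬝ᵥ B *ᵥ x = 0 := by
    rw [← dotProduct_add, ← add_mulVec, h, dotProduct_zero]
  exact (hA.dotProduct_mulVec_zero_iff x).mp
    ((add_eq_zero_iff_of_nonneg (hA.dotProduct_mulVec_nonneg x)
      (hB.dotProduct_mulVec_nonneg x)).mp hsum).1

theorem PosSemidef.exists_eq_smul_vecMulVec_star {S : Matrix m m 𝕜}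
    (hS : S.PosSemidef) (hrank : S.rank = 1) :
    ∃ (d : 𝕜) (c : m → 𝕜) (i₀ : m), 0 < d ∧ c i₀ = 1 ∧ S = d • vecMulVec (star c) c := by
  have hS0 : S.trace ≠ 0 := by
    rw [Ne, hS.trace_eq_zero_iff]
    rintro rfl
    simp at hrank
  obtain ⟨i₀, -, hd⟩ : ∃ i ∈ Finset.univ, S i i ≠ 0 := Finset.exists_ne_zero_of_sum_ne_zero hS0
  have hd' : star (S i₀ i₀) = S i₀ i₀ := hS.isHermitian.apply i₀ i₀
  refine ⟨S i₀ i₀, fun j => S i₀ j / S i₀ i₀, i₀, hS.diag_nonneg.lt_of_ne' hd, div_self hd, ?_⟩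
  ext i j
  have hminor := mul_mul_eq_mul_mul_of_rank_le_one hrank.le i i₀ j i₀
  simp only [smul_apply, vecMulVec_apply, Pi.star_apply, star_div₀, hd', hS.isHermitian.apply,
    smul_eq_mul]
  field_simp
  linear_combination hminor

theorem PosSemidef.eq_kronecker_of_add_eq_kronecker [DecidableEq m] [DecidableEq n]
    {R R' : Matrix (m × n) (m × n) 𝕜} {S : Matrix m m 𝕜} {T : Matrix n n 𝕜}
    (hR : R.PosSemidef) (hR' : R'.PosSemidef) (hS : S.PosSemidef) (hrank : S.rank = 1)
    (hsum : R + R' = S ⊗ₖ T) :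
    ∃ T₀ : Matrix n n 𝕜, T₀.PosSemidef ∧ R = S ⊗ₖ T₀ := by
  obtain ⟨d, c, i₀, hd, hc, rfl⟩ := hS.exists_eq_smul_vecMulVec_star hrank
  have hentry : ∀ (A : Matrix (m × n) (m × n) 𝕜) (k : 𝕜) p q r,
      (A *ᵥ (Pi.single p 1 - k • Pi.single q 1)) r = A r p - k * A r q := by
    simp [mulVec_sub, mulVec_smul]
  have hcol : ∀ i a j b, R (i, a) (j, b) = c j * R (i, a) (i₀, b) := by
    intro i a j b
    have hker : (R + R') *ᵥ (Pi.single (j, b) 1 - c j • Pi.single (i₀, b) 1) = 0 := by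
      ext ⟨i', a'⟩
      rw [hentry, hsum]
      simp only [kroneckerMap_apply, smul_apply, vecMulVec_apply, hc, smul_eq_mul, mul_one,
        Pi.zero_apply]
      ring
    rw [← sub_eq_zero, ← hentry]
    exact congrFun (hR.mulVec_eq_zero_of_add_mulVec_eq_zero hR' hker) (i, a)
  refine ⟨d⁻¹ • R.submatrix (i₀, ·) (i₀, ·), (hR.submatrix _).smul (inv_nonneg.2 hd.le), ?_⟩
  rw [smul_kronecker, kronecker_smul, smul_smul, mul_inv_cancel₀ hd.ne', one_smul]
  exact hR.isHermitian.eq_vecMulVec_kronecker_submatrix hcol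

end Matrix

theorem rank_one_factor_product_decomposition_general
    (m n : ℕ)
    (R0 R1 : Matrix (Fin m × Fin n) (Fin m × Fin n) ℂ)
    (S : Matrix (Fin m) (Fin m) ℂ) (T : Matrix (Fin n) (Fin n) ℂ)
    (hR0 : R0.PosSemidef) (hR1 : R1.PosSemidef)
    (hS : S.PosSemidef)
    (hrank : S.rank = 1)
    (hsum : R0 + R1 = S ⊗ₖ T) :
    ∃ T0 T1 : Matrix (Fin n) (Fin n) ℂ,
      T0.PosSemidef ∧ T1.PosSemidef ∧ R0 = S ⊗ₖ T0 ∧ R1 = S ⊗ₖ T1 := by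
  obtain ⟨T0, hT0, hRT0⟩ := hR0.eq_kronecker_of_add_eq_kronecker hR1 hS hrank hsum
  obtain ⟨T1, hT1, hRT1⟩ :=
    hR1.eq_kronecker_of_add_eq_kronecker hR0 hS hrank (add_comm R0 R1 ▸ hsum)
  exact ⟨T0, T1, hT0, hT1, hRT0, hRT1⟩

/-- **Observation 1 (rank-1 factor forces product decomposition).**
If `R₀, R₁` are positive semidefinite matrices on the tensor product with
`R₀ + R₁ = S ⊗ T`, where `S` is positive semidefinite of rank 1 and `T` is
positive semidefinite, then each `Rⱼ` is of the form `S ⊗ Tⱼ` for some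
positive semidefinite `Tⱼ`. -/
theorem rank_one_factor_product_decomposition
    (m n : ℕ) (hm : 0 < m) (hn : 0 < n)
    (R0 R1 : Matrix (Fin m × Fin n) (Fin m × Fin n) ℂ)
    (S : Matrix (Fin m) (Fin m) ℂ) (T : Matrix (Fin n) (Fin n) ℂ)
    (hR0 : R0.PosSemidef) (hR1 : R1.PosSemidef)
    (hS : S.PosSemidef) (hT : T.PosSemidef)
    (hrank : S.rank = 1)
    (hsum : R0 + R1 = S ⊗ₖ T) :
    ∃ T0 T1 : Matrix (Fin n) (Fin n) ℂ,
      T0.PosSemidef ∧ T1.PosSemidef ∧ R0 = S ⊗ₖ T0 ∧ R1 = S ⊗ₖ T1 :=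
  rank_one_factor_product_decomposition_general m n R0 R1 S T hR0 hR1 hS hrank hsum
end

section
/- Let P ∈ Q_finite be a quantum behaviour in the (2,2,2,2) Bell scenario. Suppose P self-tests a canonical realisation (H_{A'}, H_{B'}, Ψ_{A'B'}, {P^x_a}, {Q^y_b}): that is, there are finite-dimensional complex Hilbert spaces H_{A'}, H_{B'}, a pure state Ψ_{A'B'} = |ψ⟩⟨ψ| on H_{A'} ⊗ H_{B'} whose reduced states on H_{A'} and H_{B'} are full-rank, and projective measurements {P^x_a} on H_{A'}, {Q^y_b} on H_{B'} realising P, such that for EVERY finite-dimensional realisation (H_A, H_B, ρ_{AB}, {E^x_a}, {F^y_b}) of P there exist finite-dimensional Hilbert spaces H_{A''}, H_{B''}, linear isometries V_A : H_A → H_{A'} ⊗ H_{A''} and V_B : H_B → H_{B'} ⊗ H_{B''}, and a state σ_{A''B''} on H_{A''} ⊗ H_{B''} with (V_A ⊗ V_B)[(E^x_a ⊗ F^y_b)ρ_{AB}](V_A ⊗ V_B)† = [(P^x_a ⊗ Q^y_b)Ψ_{A'B'}] ⊗ σ_{A''B''} for all a, b, x, y (under the natural reordering isomorphism H_{A'}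 ⊗ H_{A''} ⊗ H_{B'} ⊗ H_{B''} ≅ H_{A'} ⊗ H_{B'} ⊗ H_{A''} ⊗ H_{B''}). Then P is an extremal point of Q_finite: whenever P = q₀P₀ + q₁P₁ with q₀, q₁ ∈ (0,1), q₀ + q₁ = 1 and P₀, P₁ ∈ Q_finite, necessarily P₀ = P₁ = P. -/
open Matrix Kronecker ComplexOrder BigOperators

/-- A behaviour in the (2,2,2,2) Bell scenario: `P a b x y = P(ab|xy)`. -/
abbrev Behaviour : Type := Fin 2 → Fin 2 → Fin 2 → Fin 2 → ℝ

/-- `(ρ, E, F)` is a finite-dimensional quantum realisation of the behaviour `P`,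
with local Hilbert spaces of dimensions `dA` and `dB`. -/
def Realises (dA dB : ℕ) (ρ : Matrix (Fin dA × Fin dB) (Fin dA × Fin dB) ℂ)
    (E : Fin 2 → Fin 2 → Matrix (Fin dA) (Fin dA) ℂ)
    (F : Fin 2 → Fin 2 → Matrix (Fin dB) (Fin dB) ℂ)
    (P : Behaviour) : Prop :=
  ρ.PosSemidef ∧ ρ.trace = 1 ∧
  (∀ x a, (E x a).PosSemidef) ∧ (∀ y b, (F y b).PosSemidef) ∧
  (∀ x, ∑ a : Fin 2, E x a = 1) ∧ (∀ y, ∑ b : Fin 2, F y b = 1) ∧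
  ∀ a b x y, (P a b x y : ℂ) = ((E x a ⊗ₖ F y b) * ρ).trace

/-- The set of behaviours admitting a finite-dimensional quantum realisation. -/
def Qfinite : Set Behaviour :=
  {P | ∃ (dA dB : ℕ), 0 < dA ∧ 0 < dB ∧
    ∃ ρ E F, Realises dA dB ρ E F P}

/-- Reduced state of a bipartite (matrix) state on the first factor. -/
noncomputable def reducedA {dA dB : ℕ} (Ψ : Matrix (Fin dA × Fin dB) (Fin dA × Fin dB) ℂ) :
    Matrix (Fin dA) (Fin dA) ℂ :=
  fun i i' => ∑ j : Fin dB, Ψ (i, j) (i', j)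

/-- Reduced state of a bipartite (matrix) state on the second factor. -/
noncomputable def reducedB {dA dB : ℕ} (Ψ : Matrix (Fin dA × Fin dB) (Fin dA × Fin dB) ℂ) :
    Matrix (Fin dB) (Fin dB) ℂ :=
  fun j j' => ∑ i : Fin dA, Ψ (i, j) (i, j')

/-- The reordering equivalence `(A' ⊗ A'') ⊗ (B' ⊗ B'') ≅ (A' ⊗ B') ⊗ (A'' ⊗ B'')`. -/
def reorder (dA' dA'' dB' dB'' : ℕ) :
    (Fin dA' × Fin dA'') × (Fin dB' × Fin dB'') ≃
      (Fin dA' × Fin dB') × (Fin dA'' × Fin dB'') :=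
  Equiv.prodProdProdComm (Fin dA') (Fin dA'') (Fin dB') (Fin dB'')

/-!
Write `P = q₀ P₀ + q₁ P₁`. Placing realisations of `P₀` and `P₁` on orthogonal blocks of
`(ℂ^{dA₀} ⊕ ℂ^{dA₁}) ⊗ (ℂ^{dB₀} ⊕ ℂ^{dB₁})` gives a realisation of `P` whose state is the
mixture `ρ = q₀ ρ₀ + q₁ ρ₁` of the two embedded states, and the block projector `Q` onto
`ℂ^{dA₀}` cuts out the first branch: `ρ Q = q₀ ρ₀`. The self-testing isometry `V` sends `ρ` to
`Ψ ⊗ σ` and each `M ρ` to `(N Ψ) ⊗ σ`; as conjugation by an isometry is multiplicative, this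
forces `V (M ρ₀) V† = (N ⊗ 1) V ρ₀ V†`. Tracing out the junk system, `q₀ tr_σ (V ρ₀ V†)` is
dominated by the pure state `Ψ`, hence equals `q₀ Ψ`, and so `P₀ = tr (M ρ₀) = tr (N Ψ) = P`.
-/

section PartialTrace

variable {R κ μ : Type*} [CommRing R] [Fintype μ]

def partialTraceRight (T : Matrix (κ × μ) (κ × μ) R) : Matrix κ κ R :=
  of fun i j => ∑ k, T (i, k) (j, k)

lemma partialTraceRight_add (S T : Matrix (κ × μ) (κ × μ) R) :
    partialTraceRight (S + T) = partialTraceRight S + partialTraceRight T := by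
  ext i j
  simp [partialTraceRight, Finset.sum_add_distrib]

lemma partialTraceRight_smul {S : Type*} [Monoid S] [DistribMulAction S R] (c : S)
    (T : Matrix (κ × μ) (κ × μ) R) :
    partialTraceRight (c • T) = c • partialTraceRight T := by
  ext i j
  simp [partialTraceRight, Finset.smul_sum]

lemma partialTraceRight_kronecker (A : Matrix κ κ R) (B : Matrix μ μ R) :
    partialTraceRight (A ⊗ₖ B) = B.trace • A := by
  ext i j
  simp [partialTraceRight, Matrix.trace, Finset.mul_sum, mul_comm]

lemma trace_partialTraceRight [Fintype κ] (T : Matrix (κ × μ) (κ × μ) R) :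
    (partialTraceRight T).trace = T.trace := by
  simp [partialTraceRight, Matrix.trace, Fintype.sum_prod_type]

lemma partialTraceRight_kronecker_one_mul [Fintype κ] [DecidableEq μ] (N : Matrix κ κ R)
    (T : Matrix (κ × μ) (κ × μ) R) :
    partialTraceRight ((N ⊗ₖ (1 : Matrix μ μ R)) * T) = N * partialTraceRight T := by
  ext i j
  simp [partialTraceRight, Matrix.mul_apply, Fintype.sum_prod_type, Matrix.one_apply,
    Finset.mul_sum]
  exact Finset.sum_comm

lemma trace_kronecker_one_mul [Fintype κ] [DecidableEq μ] (N : Matrix κ κ R)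
    (T : Matrix (κ × μ) (κ × μ) R) :
    ((N ⊗ₖ (1 : Matrix μ μ R)) * T).trace = (N * partialTraceRight T).trace := by
  rw [← trace_partialTraceRight, partialTraceRight_kronecker_one_mul]

lemma partialTraceRight_eq_sum_submatrix (T : Matrix (κ × μ) (κ × μ) R) :
    partialTraceRight T = ∑ k, T.submatrix (·, k) (·, k) := by
  ext i j
  simp [partialTraceRight, Matrix.sum_apply]

lemma Matrix.PosSemidef.partialTraceRight {T : Matrix (κ × μ) (κ × μ) ℂ} (hT : T.PosSemidef) :
    (_root_.partialTraceRight T).PosSemidef := by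
  rw [partialTraceRight_eq_sum_submatrix]
  exact posSemidef_sum _ fun _ _ => hT.submatrix _

end PartialTrace

section PureState

variable {κ : Type*} [Fintype κ]

lemma mulVec_eq_zero_of_smul_add_smul_eq_vecMulVec {ψ : κ → ℂ} {A B : Matrix κ κ ℂ}
    (hA : A.PosSemidef) (hB : B.PosSemidef) {q₀ q₁ : ℝ} (hq₀ : 0 < q₀) (hq₁ : 0 ≤ q₁)
    (h : q₀ • A + q₁ • B = vecMulVec ψ (star ψ)) {v : κ → ℂ} (hv : star ψ ⬝ᵥ v = 0) :
    A *ᵥ v = 0 := by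
  have hsum : q₀ • (star v ⬝ᵥ A *ᵥ v) + q₁ • (star v ⬝ᵥ B *ᵥ v) = 0 := by
    have := congrArg (fun M => star v ⬝ᵥ M *ᵥ v) h
    simpa [add_mulVec, smul_mulVec, vecMulVec_mulVec, hv] using this
  have hA' := smul_nonneg hq₀.le (hA.dotProduct_mulVec_nonneg v)
  have hB' := smul_nonneg hq₁ (hB.dotProduct_mulVec_nonneg v)
  have hzero := ((add_eq_zero_iff_of_nonneg hA' hB').mp hsum).1
  rw [smul_eq_zero, or_iff_right hq₀.ne'] at hzero
  exact (hA.dotProduct_mulVec_zero_iff v).mp hzero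

theorem eq_vecMulVec_of_smul_add_smul_eq_vecMulVec {ψ : κ → ℂ}
    (hψ : (vecMulVec ψ (star ψ)).trace = 1) {A B : Matrix κ κ ℂ} (hA : A.PosSemidef)
    (hB : B.PosSemidef) (hAtr : A.trace = 1) {q₀ q₁ : ℝ} (hq₀ : 0 < q₀) (hq₁ : 0 ≤ q₁)
    (h : q₀ • A + q₁ • B = vecMulVec ψ (star ψ)) :
    A = vecMulVec ψ (star ψ) := by
  set Ψ := vecMulVec ψ (star ψ)
  have hψψ : star ψ ⬝ᵥ ψ = 1 := by rwa [trace_vecMulVec, dotProduct_comm] at hψ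
  have hAΨ : A * Ψ = A := by
    refine ext_iff_mulVec.mpr fun v => ?_
    have hker := mulVec_eq_zero_of_smul_add_smul_eq_vecMulVec hA hB hq₀ hq₁ h
      (v := v - Ψ *ᵥ v) (by
        rw [dotProduct_sub, dotProduct_mulVec, vecMul_vecMulVec, hψψ, one_smul, sub_self])
    rwa [mulVec_sub, sub_eq_zero, eq_comm, mulVec_mulVec] at hker
  have hΨA : Ψ * A = A := by
    simpa [conjTranspose_mul, hA.isHermitian.eq, Ψ, conjTranspose_vecMulVec] using
      congrArg conjTranspose hAΨ
  have hscalar : A = (star ψ ⬝ᵥ A *ᵥ ψ) • Ψ := by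
    calc A = Ψ * A * Ψ := by rw [hΨA, hAΨ]
      _ = _ := by
        rw [vecMulVec_mul, vecMulVec_mul_vecMulVec, vecMulVec_smul, ← dotProduct_mulVec]
  rw [hscalar, trace_smul, hψ, smul_eq_mul, mul_one] at hAtr
  rw [hscalar, hAtr, one_smul]

end PureState

section Isometry

variable {R ι κ ν : Type*} [CommRing R] [StarRing R]

lemma trace_mul_mul_conjTranspose_of_isometry [Fintype ι] [Fintype κ] [DecidableEq ι]
    {V : Matrix κ ι R} (hV : Vᴴ * V = 1) (X : Matrix ι ι R) : (V * X * Vᴴ).trace = X.trace := by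
  rw [trace_mul_comm, ← Matrix.mul_assoc, hV, Matrix.one_mul]

lemma mul_mul_conjTranspose_mul_of_isometry [Fintype ι] [Fintype κ] [DecidableEq ι]
    {V : Matrix κ ι R} (hV : Vᴴ * V = 1) (X Y : Matrix ι ι R) :
    V * X * Vᴴ * (V * Y * Vᴴ) = V * (X * Y) * Vᴴ := by
  simp only [Matrix.mul_assoc]
  rw [← Matrix.mul_assoc Vᴴ V, hV, Matrix.one_mul]

lemma kronecker_isometry {ι' κ' : Type*} [Fintype κ] [Fintype κ'] [DecidableEq ι]
    [DecidableEq ι'] {A : Matrix κ ι R} {B : Matrix κ' ι' R} (hA : Aᴴ * A = 1) (hB : Bᴴ * B = 1) :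
    (A ⊗ₖ B)ᴴ * (A ⊗ₖ B) = 1 := by
  rw [conjTranspose_kronecker, ← mul_kronecker_mul, hA, hB, one_kronecker_one]

lemma submatrix_isometry [Fintype κ] [Fintype ν] [DecidableEq ι] {V : Matrix κ ι R}
    (hV : Vᴴ * V = 1) (e : ν ≃ κ) :
    (V.submatrix e id)ᴴ * V.submatrix e id = 1 := by
  rw [conjTranspose_submatrix, submatrix_mul_equiv _ _ _ e, submatrix_id_id, hV]

lemma submatrix_mul_mul_conjTranspose [Fintype ι] (V : Matrix κ ι R) (e : ν ≃ κ)
    (X : Matrix ι ι R) :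
    V.submatrix e id * X * (V.submatrix e id)ᴴ = (V * X * Vᴴ).submatrix e e := by
  ext i j
  simp [Matrix.mul_apply]

lemma trace_mul_mul_mul_conjTranspose [Fintype ι] [Fintype κ] (M : Matrix κ κ R)
    (V : Matrix κ ι R) (X : Matrix ι ι R) : (M * (V * X * Vᴴ)).trace = (Vᴴ * M * V * X).trace := by
  rw [← Matrix.mul_assoc, ← Matrix.mul_assoc, trace_mul_comm]
  simp only [Matrix.mul_assoc]

end Isometry

section OrthogonalSplitting

variable {R ι ι₀ ι₁ : Type*} [CommRing R] [StarRing R] [Fintype ι] [Fintype ι₀] [Fintype ι₁]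
  [DecidableEq ι] [DecidableEq ι₀] [DecidableEq ι₁]

structure IsOrthogonalSplitting (J₀ : Matrix ι ι₀ R) (J₁ : Matrix ι ι₁ R) : Prop where
  isometry_left : J₀ᴴ * J₀ = 1
  isometry_right : J₁ᴴ * J₁ = 1
  orthogonal : J₀ᴴ * J₁ = 0
  complete : J₀ * J₀ᴴ + J₁ * J₁ᴴ = 1

lemma isOrthogonalSplitting_fromRows :
    IsOrthogonalSplitting (fromRows (1 : Matrix ι₀ ι₀ R) 0) (fromRows 0 (1 : Matrix ι₁ ι₁ R)) := by
  constructor <;>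
    simp only [conjTranspose_fromRows_eq_fromCols_conjTranspose, fromCols_mul_fromRows,
      fromRows_mul_fromCols] <;>
    simp [fromBlocks_add, fromBlocks_one]

namespace IsOrthogonalSplitting

variable {J₀ : Matrix ι ι₀ R} {J₁ : Matrix ι ι₁ R}

lemma symm (h : IsOrthogonalSplitting J₀ J₁) : IsOrthogonalSplitting J₁ J₀ where
  isometry_left := h.isometry_right
  isometry_right := h.isometry_left
  orthogonal := by rw [← conjTranspose_conjTranspose J₀, ← conjTranspose_mul, h.orthogonal,
    conjTranspose_zero]
  complete := by rw [add_comm, h.complete]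

lemma submatrix {ι' : Type*} [Fintype ι'] [DecidableEq ι'] (h : IsOrthogonalSplitting J₀ J₁)
    (e : ι' ≃ ι) : IsOrthogonalSplitting (J₀.submatrix e id) (J₁.submatrix e id) where
  isometry_left := submatrix_isometry h.isometry_left e
  isometry_right := submatrix_isometry h.isometry_right e
  orthogonal := by
    rw [conjTranspose_submatrix, submatrix_mul_equiv _ _ _ e, submatrix_id_id, h.orthogonal]
  complete := by
    have h₀ := submatrix_mul_mul_conjTranspose J₀ e 1
    have h₁ := submatrix_mul_mul_conjTranspose J₁ e 1
    simp only [Matrix.mul_one] at h₀ h₁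
    rw [h₀, h₁, ← submatrix_one_equiv e, ← h.complete]
    rfl

end IsOrthogonalSplitting

lemma exists_isOrthogonalSplitting (n₀ n₁ : ℕ) :
    ∃ (J₀ : Matrix (Fin (n₀ + n₁)) (Fin n₀) R) (J₁ : Matrix (Fin (n₀ + n₁)) (Fin n₁) R),
      IsOrthogonalSplitting J₀ J₁ :=
  ⟨_, _, isOrthogonalSplitting_fromRows.submatrix finSumFinEquiv.symm⟩

end OrthogonalSplitting

section OrthogonalSum

variable {R ι ι₀ ι₁ : Type*} [CommRing R] [StarRing R] [Fintype ι₀] [Fintype ι₁]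

def orthogonalSum (J₀ : Matrix ι ι₀ R) (J₁ : Matrix ι ι₁ R) (X : Matrix ι₀ ι₀ R)
    (Y : Matrix ι₁ ι₁ R) : Matrix ι ι R :=
  J₀ * X * J₀ᴴ + J₁ * Y * J₁ᴴ

lemma orthogonalSum_comm (J₀ : Matrix ι ι₀ R) (J₁ : Matrix ι ι₁ R) (X : Matrix ι₀ ι₀ R)
    (Y : Matrix ι₁ ι₁ R) : orthogonalSum J₁ J₀ Y X = orthogonalSum J₀ J₁ X Y :=
  add_comm _ _

namespace IsOrthogonalSplitting

variable [Fintype ι] [DecidableEq ι] [DecidableEq ι₀] [DecidableEq ι₁] {J₀ : Matrix ι ι₀ R}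
  {J₁ : Matrix ι ι₁ R}

lemma conjTranspose_mul_orthogonalSum_mul (h : IsOrthogonalSplitting J₀ J₁)
    (X : Matrix ι₀ ι₀ R) (Y : Matrix ι₁ ι₁ R) : J₀ᴴ * orthogonalSum J₀ J₁ X Y * J₀ = X := by
  have h₁₀ : J₁ᴴ * J₀ = 0 := h.symm.orthogonal
  simp only [orthogonalSum, Matrix.mul_add, Matrix.add_mul, Matrix.mul_assoc]
  simp only [← Matrix.mul_assoc J₀ᴴ, h.isometry_left, h.orthogonal, h₁₀]
  simp

lemma sum_orthogonalSum (h : IsOrthogonalSplitting J₀ J₁) {α : Type*} [Fintype α]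
    {X : α → Matrix ι₀ ι₀ R} {Y : α → Matrix ι₁ ι₁ R} (hX : ∑ a, X a = 1) (hY : ∑ a, Y a = 1) :
    ∑ a, orthogonalSum J₀ J₁ (X a) (Y a) = 1 := by
  simp only [orthogonalSum, Finset.sum_add_distrib, ← Matrix.mul_sum, ← Matrix.sum_mul, hX, hY,
    Matrix.mul_one, h.complete]

end IsOrthogonalSplitting

lemma Matrix.PosSemidef.orthogonalSum [Fintype ι] {J₀ : Matrix ι ι₀ ℂ} {J₁ : Matrix ι ι₁ ℂ}
    {X : Matrix ι₀ ι₀ ℂ} {Y : Matrix ι₁ ι₁ ℂ} (hX : X.PosSemidef) (hY : Y.PosSemidef) :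
    (_root_.orthogonalSum J₀ J₁ X Y).PosSemidef :=
  (hX.mul_mul_conjTranspose_same J₀).add (hY.mul_mul_conjTranspose_same J₁)

end OrthogonalSum

section MixedRealisation

variable {ι ι₀ ι₁ κ κ₀ κ₁ : Type*} [Fintype ι] [Fintype ι₀] [Fintype ι₁] [Fintype κ]
  [Fintype κ₀] [Fintype κ₁] [DecidableEq ι] [DecidableEq ι₀] [DecidableEq ι₁] [DecidableEq κ]
  {JA₀ : Matrix ι ι₀ ℂ} {JA₁ : Matrix ι ι₁ ℂ} {JB₀ : Matrix κ κ₀ ℂ} {JB₁ : Matrix κ κ₁ ℂ}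

lemma trace_orthogonalSum_kronecker_mul_conj [DecidableEq κ₀] [DecidableEq κ₁]
    (hJA : IsOrthogonalSplitting JA₀ JA₁) (hJB : IsOrthogonalSplitting JB₀ JB₁)
    (X₀ : Matrix ι₀ ι₀ ℂ) (X₁ : Matrix ι₁ ι₁ ℂ) (Y₀ : Matrix κ₀ κ₀ ℂ) (Y₁ : Matrix κ₁ κ₁ ℂ) (ρ₀ : Matrix (ι₀ × κ₀) (ι₀ × κ₀) ℂ) :
    ((orthogonalSum JA₀ JA₁ X₀ X₁ ⊗ₖ orthogonalSum JB₀ JB₁ Y₀ Y₁) *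
      ((JA₀ ⊗ₖ JB₀) * ρ₀ * (JA₀ ⊗ₖ JB₀)ᴴ)).trace = ((X₀ ⊗ₖ Y₀) * ρ₀).trace := by
  rw [trace_mul_mul_mul_conjTranspose, conjTranspose_kronecker, ← mul_kronecker_mul,
    ← mul_kronecker_mul, hJA.conjTranspose_mul_orthogonalSum_mul,
    hJB.conjTranspose_mul_orthogonalSum_mul]

lemma IsOrthogonalSplitting.mixture_mul_kronecker_projection
    (hJA : IsOrthogonalSplitting JA₀ JA₁) (ρ₀ : Matrix (ι₀ × κ₀) (ι₀ × κ₀) ℂ)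
    (ρ₁ : Matrix (ι₁ × κ₁) (ι₁ × κ₁) ℂ) (q₀ q₁ : ℝ) :
    (q₀ • ((JA₀ ⊗ₖ JB₀) * ρ₀ * (JA₀ ⊗ₖ JB₀)ᴴ) + q₁ • ((JA₁ ⊗ₖ JB₁) * ρ₁ * (JA₁ ⊗ₖ JB₁)ᴴ)) *
        ((JA₀ * JA₀ᴴ) ⊗ₖ (1 : Matrix κ κ ℂ)) = q₀ • ((JA₀ ⊗ₖ JB₀) * ρ₀ * (JA₀ ⊗ₖ JB₀)ᴴ) := by
  have h₀ : (JA₀ ⊗ₖ JB₀)ᴴ * ((JA₀ * JA₀ᴴ) ⊗ₖ (1 : Matrix κ κ ℂ)) = (JA₀ ⊗ₖ JB₀)ᴴ := by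
    rw [conjTranspose_kronecker, ← mul_kronecker_mul, ← Matrix.mul_assoc, hJA.isometry_left,
      Matrix.one_mul, Matrix.mul_one]
  have h₁ : (JA₁ ⊗ₖ JB₁)ᴴ * ((JA₀ * JA₀ᴴ) ⊗ₖ (1 : Matrix κ κ ℂ)) = 0 := by
    rw [conjTranspose_kronecker, ← mul_kronecker_mul, ← Matrix.mul_assoc, hJA.symm.orthogonal,
      Matrix.zero_mul, zero_kronecker]
  rw [Matrix.add_mul, Matrix.smul_mul, Matrix.smul_mul, Matrix.mul_assoc _ (JA₀ ⊗ₖ JB₀)ᴴ, h₀,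
    Matrix.mul_assoc _ (JA₁ ⊗ₖ JB₁)ᴴ, h₁, Matrix.mul_zero, smul_zero, add_zero]

end MixedRealisation

theorem Realises.mixture {dA dB dA₀ dB₀ dA₁ dB₁ : ℕ}
    {JA₀ : Matrix (Fin dA) (Fin dA₀) ℂ} {JA₁ : Matrix (Fin dA) (Fin dA₁) ℂ}
    {JB₀ : Matrix (Fin dB) (Fin dB₀) ℂ} {JB₁ : Matrix (Fin dB) (Fin dB₁) ℂ}
    (hJA : IsOrthogonalSplitting JA₀ JA₁) (hJB : IsOrthogonalSplitting JB₀ JB₁)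
    {ρ₀ E₀ F₀ P₀ ρ₁ E₁ F₁ P₁} (h₀ : Realises dA₀ dB₀ ρ₀ E₀ F₀ P₀)
    (h₁ : Realises dA₁ dB₁ ρ₁ E₁ F₁ P₁) {q₀ q₁ : ℝ} (hq₀ : 0 ≤ q₀) (hq₁ : 0 ≤ q₁)
    (hq : q₀ + q₁ = 1) :
    Realises dA dB
      (q₀ • ((JA₀ ⊗ₖ JB₀) * ρ₀ * (JA₀ ⊗ₖ JB₀)ᴴ) + q₁ • ((JA₁ ⊗ₖ JB₁) * ρ₁ * (JA₁ ⊗ₖ JB₁)ᴴ))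
      (fun x a => orthogonalSum JA₀ JA₁ (E₀ x a) (E₁ x a))
      (fun y b => orthogonalSum JB₀ JB₁ (F₀ y b) (F₁ y b)) (q₀ • P₀ + q₁ • P₁) := by
  obtain ⟨hρ₀, htr₀, hE₀, hF₀, hE₀sum, hF₀sum, hP₀⟩ := h₀
  obtain ⟨hρ₁, htr₁, hE₁, hF₁, hE₁sum, hF₁sum, hP₁⟩ := h₁
  refine ⟨((hρ₀.mul_mul_conjTranspose_same _).smul hq₀).add
      ((hρ₁.mul_mul_conjTranspose_same _).smul hq₁), ?_,
    fun x a => (hE₀ x a).orthogonalSum (hE₁ x a), fun y b => (hF₀ y b).orthogonalSum (hF₁ y b),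
    fun x => hJA.sum_orthogonalSum (hE₀sum x) (hE₁sum x),
    fun y => hJB.sum_orthogonalSum (hF₀sum y) (hF₁sum y), fun a b x y => ?_⟩
  · rw [trace_add, trace_smul, trace_smul,
      trace_mul_mul_conjTranspose_of_isometry
        (kronecker_isometry hJA.isometry_left hJB.isometry_left),
      trace_mul_mul_conjTranspose_of_isometry
        (kronecker_isometry hJA.isometry_right hJB.isometry_right), htr₀, htr₁]
    simp only [Complex.real_smul, mul_one]
    exact_mod_cast hq
  · dsimp only
    rw [Matrix.mul_add, trace_add, Matrix.mul_smul, Matrix.mul_smul, trace_smul, trace_smul,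
      trace_orthogonalSum_kronecker_mul_conj hJA hJB, ← orthogonalSum_comm JA₀,
      ← orthogonalSum_comm JB₀, trace_orthogonalSum_kronecker_mul_conj hJA.symm hJB.symm,
      ← hP₀, ← hP₁]
    simp [Complex.real_smul]

section Kronecker

variable {R ι κ α β : Type*} [CommRing R] [Fintype α] [Fintype β]

lemma sum_kronecker_eq_one [DecidableEq ι] [DecidableEq κ] {A : α → Matrix ι ι R}
    {B : β → Matrix κ κ R} (hA : ∑ a, A a = 1) (hB : ∑ b, B b = 1) :
    ∑ p : α × β, A p.1 ⊗ₖ B p.2 = 1 :=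
  calc ∑ p : α × β, A p.1 ⊗ₖ B p.2 = (∑ a, A a) ⊗ₖ (∑ b, B b) := by
        ext i j
        simp [Matrix.sum_apply, Finset.sum_mul_sum, Fintype.sum_prod_type]
    _ = 1 := by rw [hA, hB, one_kronecker_one]

lemma sum_kronecker (A : α → Matrix ι ι R) (B : Matrix κ κ R) :
    (∑ a, A a) ⊗ₖ B = ∑ a, A a ⊗ₖ B := by
  ext i j
  simp [Matrix.sum_apply, Finset.sum_mul]

end Kronecker

section Conjugation

variable {R ι κ μ : Type*} [CommRing R] [StarRing R] [Fintype ι] [Fintype κ] [DecidableEq ι]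
  [DecidableEq κ]

lemma conj_eq_kronecker_of_forall_conj_mul_eq {V : Matrix (κ × μ) ι R} {ρ : Matrix ι ι R}
    {Ψ : Matrix κ κ R} {σ : Matrix μ μ R} {α : Type*} [Fintype α] {M : α → Matrix ι ι R}
    {N : α → Matrix κ κ R} (hM : ∑ i, M i = 1) (hN : ∑ i, N i = 1)
    (h : ∀ i, V * (M i * ρ) * Vᴴ = (N i * Ψ) ⊗ₖ σ) : V * ρ * Vᴴ = Ψ ⊗ₖ σ :=
  calc V * ρ * Vᴴ = ∑ i, V * (M i * ρ) * Vᴴ := by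
        rw [← Matrix.sum_mul, ← Matrix.mul_sum, ← Matrix.sum_mul, hM, Matrix.one_mul]
    _ = ∑ i, (N i * Ψ) ⊗ₖ σ := Finset.sum_congr rfl fun i _ => h i
    _ = Ψ ⊗ₖ σ := by rw [← sum_kronecker, ← Matrix.sum_mul, hN, Matrix.one_mul]

end Conjugation

section Branch

variable {ι κ μ : Type*} [Fintype ι] [Fintype κ] [Fintype μ] [DecidableEq ι]
  {V : Matrix (κ × μ) ι ℂ} {σ : Matrix μ μ ℂ} {ρ₀ ρ₁ : Matrix ι ι ℂ} {q₀ q₁ : ℝ}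

lemma conj_mul_eq_kronecker_one_mul_conj [DecidableEq μ] (hV : Vᴴ * V = 1) {ρ Q : Matrix ι ι ℂ}
    {Ψ : Matrix κ κ ℂ} (hq₀ : q₀ ≠ 0) (hQ : ρ * Q = q₀ • ρ₀) (hρ : V * ρ * Vᴴ = Ψ ⊗ₖ σ)
    {M : Matrix ι ι ℂ} {N : Matrix κ κ ℂ} (hMN : V * (M * ρ) * Vᴴ = (N * Ψ) ⊗ₖ σ) :
    V * (M * ρ₀) * Vᴴ = (N ⊗ₖ (1 : Matrix μ μ ℂ)) * (V * ρ₀ * Vᴴ) := by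
  refine smul_right_injective _ hq₀ ?_
  calc q₀ • (V * (M * ρ₀) * Vᴴ) = V * (M * ρ) * Vᴴ * (V * Q * Vᴴ) := by
        rw [mul_mul_conjTranspose_mul_of_isometry hV, Matrix.mul_assoc M, hQ, Matrix.mul_smul,
          Matrix.mul_smul, Matrix.smul_mul]
    _ = (N ⊗ₖ (1 : Matrix μ μ ℂ)) * (V * ρ * Vᴴ) * (V * Q * Vᴴ) := by
        rw [hMN, hρ, ← mul_kronecker_mul, Matrix.one_mul]
    _ = q₀ • ((N ⊗ₖ (1 : Matrix μ μ ℂ)) * (V * ρ₀ * Vᴴ)) := by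
        rw [Matrix.mul_assoc, mul_mul_conjTranspose_mul_of_isometry hV, hQ, Matrix.mul_smul,
          Matrix.smul_mul, Matrix.mul_smul]

lemma partialTraceRight_conj_eq_of_conj_mixture (hV : Vᴴ * V = 1) {ψ : κ → ℂ}
    (hψ : (vecMulVec ψ (star ψ)).trace = 1) (hσ : σ.trace = 1) (h₀ : ρ₀.PosSemidef)
    (h₁ : ρ₁.PosSemidef) (htr₀ : ρ₀.trace = 1) (hq₀ : 0 < q₀) (hq₁ : 0 ≤ q₁)
    (hρ : V * (q₀ • ρ₀ + q₁ • ρ₁) * Vᴴ = vecMulVec ψ (star ψ) ⊗ₖ σ) :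
    partialTraceRight (V * ρ₀ * Vᴴ) = vecMulVec ψ (star ψ) := by
  refine eq_vecMulVec_of_smul_add_smul_eq_vecMulVec hψ
    (h₀.mul_mul_conjTranspose_same V).partialTraceRight
    (h₁.mul_mul_conjTranspose_same V).partialTraceRight ?_ hq₀ hq₁ ?_
  · rw [trace_partialTraceRight, trace_mul_mul_conjTranspose_of_isometry hV, htr₀]
  · have hlin : q₀ • (V * ρ₀ * Vᴴ) + q₁ • (V * ρ₁ * Vᴴ) = V * (q₀ • ρ₀ + q₁ • ρ₁) * Vᴴ := by
      simp only [Matrix.mul_add, Matrix.add_mul, Matrix.mul_smul, Matrix.smul_mul]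
    rw [← partialTraceRight_smul, ← partialTraceRight_smul, ← partialTraceRight_add, hlin, hρ,
      partialTraceRight_kronecker, hσ, one_smul]

theorem trace_mul_eq_of_conj_mixture [DecidableEq μ] (hV : Vᴴ * V = 1) {ψ : κ → ℂ}
    (hψ : (vecMulVec ψ (star ψ)).trace = 1) (hσ : σ.trace = 1) (h₀ : ρ₀.PosSemidef)
    (h₁ : ρ₁.PosSemidef) (htr₀ : ρ₀.trace = 1) (hq₀ : 0 < q₀) (hq₁ : 0 ≤ q₁)
    {Q : Matrix ι ι ℂ} (hQ : (q₀ • ρ₀ + q₁ • ρ₁) * Q = q₀ • ρ₀)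
    (hρ : V * (q₀ • ρ₀ + q₁ • ρ₁) * Vᴴ = vecMulVec ψ (star ψ) ⊗ₖ σ)
    {M : Matrix ι ι ℂ} {N : Matrix κ κ ℂ}
    (hMN : V * (M * (q₀ • ρ₀ + q₁ • ρ₁)) * Vᴴ = (N * vecMulVec ψ (star ψ)) ⊗ₖ σ) :
    (M * ρ₀).trace = (N * vecMulVec ψ (star ψ)).trace :=
  calc (M * ρ₀).trace = (V * (M * ρ₀) * Vᴴ).trace :=
        (trace_mul_mul_conjTranspose_of_isometry hV _).symm
    _ = (N * partialTraceRight (V * ρ₀ * Vᴴ)).trace := by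
        rw [conj_mul_eq_kronecker_one_mul_conj hV hq₀.ne' hQ hρ hMN, trace_kronecker_one_mul]
    _ = (N * vecMulVec ψ (star ψ)).trace := by
        rw [partialTraceRight_conj_eq_of_conj_mixture hV hψ hσ h₀ h₁ htr₀ hq₀ hq₁ hρ]

end Branch

def SelfTests {dA' dB' : ℕ} (P : Behaviour) (ψ : Fin dA' × Fin dB' → ℂ)
    (Pm : Fin 2 → Fin 2 → Matrix (Fin dA') (Fin dA') ℂ)
    (Qm : Fin 2 → Fin 2 → Matrix (Fin dB') (Fin dB') ℂ) : Prop :=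
  ∀ (dA dB : ℕ) (ρ : Matrix (Fin dA × Fin dB) (Fin dA × Fin dB) ℂ)
    (E : Fin 2 → Fin 2 → Matrix (Fin dA) (Fin dA) ℂ)
    (F : Fin 2 → Fin 2 → Matrix (Fin dB) (Fin dB) ℂ),
    Realises dA dB ρ E F P →
    ∃ (dA'' dB'' : ℕ)
      (VA : Matrix (Fin dA' × Fin dA'') (Fin dA) ℂ)
      (VB : Matrix (Fin dB' × Fin dB'') (Fin dB) ℂ)
      (σ : Matrix (Fin dA'' × Fin dB'') (Fin dA'' × Fin dB'') ℂ),
      VAᴴ * VA = 1 ∧ VBᴴ * VB = 1 ∧ σ.PosSemidef ∧ σ.trace = 1 ∧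
      ∀ a b x y,
        Matrix.reindex (reorder dA' dA'' dB' dB'') (reorder dA' dA'' dB' dB'')
            ((VA ⊗ₖ VB) * ((E x a ⊗ₖ F y b) * ρ) * (VA ⊗ₖ VB)ᴴ)
          = ((Pm x a ⊗ₖ Qm y b) * Matrix.vecMulVec ψ (star ψ)) ⊗ₖ σ

theorem SelfTests.eq_of_eq_smul_add_smul {dA' dB' : ℕ} {P : Behaviour}
    {ψ : Fin dA' × Fin dB' → ℂ} {Pm : Fin 2 → Fin 2 → Matrix (Fin dA') (Fin dA') ℂ}
    {Qm : Fin 2 → Fin 2 → Matrix (Fin dB') (Fin dB') ℂ} (hst : SelfTests P ψ Pm Qm)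
    (hcanon : Realises dA' dB' (vecMulVec ψ (star ψ)) Pm Qm P) {q₀ q₁ : ℝ} (hq₀ : 0 < q₀)
    (hq₁ : 0 < q₁) (hq : q₀ + q₁ = 1) {P₀ P₁ : Behaviour} (hP₀ : P₀ ∈ Qfinite)
    (hP₁ : P₁ ∈ Qfinite) (hP : P = q₀ • P₀ + q₁ • P₁) : P₀ = P := by
  obtain ⟨dA₀, dB₀, -, -, ρ₀, E₀, F₀, h₀⟩ := hP₀
  obtain ⟨dA₁, dB₁, -, -, ρ₁, E₁, F₁, h₁⟩ := hP₁
  obtain ⟨JA₀, JA₁, hJA⟩ := exists_isOrthogonalSplitting (R := ℂ) dA₀ dA₁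
  obtain ⟨JB₀, JB₁, hJB⟩ := exists_isOrthogonalSplitting (R := ℂ) dB₀ dB₁
  have hmix := hP ▸ Realises.mixture hJA hJB h₀ h₁ hq₀.le hq₁.le hq
  obtain ⟨dA'', dB'', VA, VB, σ, hVA, hVB, -, hσ, hconj⟩ := hst _ _ _ _ _ hmix
  obtain ⟨-, -, -, -, hEsum, hFsum, -⟩ := hmix
  obtain ⟨hρ₀, htr₀, -, -, -, -, hP₀⟩ := h₀
  obtain ⟨hρ₁, -, -, -, -, -, -⟩ := h₁
  obtain ⟨-, hΨ, -, -, hPmsum, hQmsum, hPeq⟩ := hcanon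
  have hV := submatrix_isometry (kronecker_isometry hVA hVB) (reorder dA' dA'' dB' dB'').symm
  have hconjV a b x y := (submatrix_mul_mul_conjTranspose _ _ _).trans (hconj a b x y)
  have hstate := conj_eq_kronecker_of_forall_conj_mul_eq
    (sum_kronecker_eq_one (hEsum 0) (hFsum 0)) (sum_kronecker_eq_one (hPmsum 0) (hQmsum 0))
    fun p : Fin 2 × Fin 2 => hconjV p.1 p.2 0 0
  funext a b x y
  have key := trace_mul_eq_of_conj_mixture hV hΨ hσ (hρ₀.mul_mul_conjTranspose_same _)
    (hρ₁.mul_mul_conjTranspose_same _)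
    (by rw [trace_mul_mul_conjTranspose_of_isometry
      (kronecker_isometry hJA.isometry_left hJB.isometry_left), htr₀])
    hq₀ hq₁.le (hJA.mixture_mul_kronecker_projection ρ₀ ρ₁ q₀ q₁) hstate (hconjV a b x y)
  rw [trace_orthogonalSum_kronecker_mul_conj hJA hJB, ← hP₀, ← hPeq] at key
  exact_mod_cast key

theorem self_testing_implies_extremal_general
    (P : Behaviour)
    (dA' dB' : ℕ)
    (ψ : Fin dA' × Fin dB' → ℂ)
    (Pm : Fin 2 → Fin 2 → Matrix (Fin dA') (Fin dA') ℂ)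
    (Qm : Fin 2 → Fin 2 → Matrix (Fin dB') (Fin dB') ℂ)
    -- the canonical realisation realises `P`:
    (hcanon : Realises dA' dB' (Matrix.vecMulVec ψ (star ψ)) Pm Qm P)
    -- the self-testing hypothesis:
    (hselftest : ∀ (dA dB : ℕ) (ρ : Matrix (Fin dA × Fin dB) (Fin dA × Fin dB) ℂ)
      (E : Fin 2 → Fin 2 → Matrix (Fin dA) (Fin dA) ℂ)
      (F : Fin 2 → Fin 2 → Matrix (Fin dB) (Fin dB) ℂ),
      Realises dA dB ρ E F P →
      ∃ (dA'' dB'' : ℕ)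
        (VA : Matrix (Fin dA' × Fin dA'') (Fin dA) ℂ)
        (VB : Matrix (Fin dB' × Fin dB'') (Fin dB) ℂ)
        (σ : Matrix (Fin dA'' × Fin dB'') (Fin dA'' × Fin dB'') ℂ),
        VAᴴ * VA = 1 ∧ VBᴴ * VB = 1 ∧ σ.PosSemidef ∧ σ.trace = 1 ∧
        ∀ a b x y,
          Matrix.reindex (reorder dA' dA'' dB' dB'') (reorder dA' dA'' dB' dB'')
              ((VA ⊗ₖ VB) * ((E x a ⊗ₖ F y b) * ρ) * (VA ⊗ₖ VB)ᴴ)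
            = ((Pm x a ⊗ₖ Qm y b) * Matrix.vecMulVec ψ (star ψ)) ⊗ₖ σ) :
    -- conclusion: `P` is extremal in `Q_finite`
    ∀ (q0 q1 : ℝ), q0 ∈ Set.Ioo (0 : ℝ) 1 → q1 ∈ Set.Ioo (0 : ℝ) 1 →
      q0 + q1 = 1 → ∀ P0 P1 : Behaviour, P0 ∈ Qfinite → P1 ∈ Qfinite →
      P = q0 • P0 + q1 • P1 → P0 = P ∧ P1 = P := by
  intro q0 q1 hq0 hq1 hq P0 P1 hP0 hP1 hP
  exact ⟨SelfTests.eq_of_eq_smul_add_smul hselftest hcanon hq0.1 hq1.1 hq hP0 hP1 hP,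
    SelfTests.eq_of_eq_smul_add_smul hselftest hcanon hq1.1 hq0.1 ((add_comm q1 q0).trans hq)
      hP1 hP0 (hP.trans (add_comm _ _))⟩

/-- **Self-testing implies extremality (Proposition 1).**
Suppose `P ∈ Q_finite` self-tests the canonical realisation
`(H_{A'}, H_{B'}, Ψ, {P^x_a}, {Q^y_b})`, where `Ψ = |ψ⟩⟨ψ|` is a pure state whose
reduced states are full-rank and the measurements are projective: for every
finite-dimensional realisation `(ρ, E, F)` of `P` there are isometries
`V_A, V_B` and an auxiliary state `σ` with
`(V_A ⊗ V_B)[(E^x_a ⊗ F^y_b)ρ](V_A ⊗ V_B)† = [(P^x_a ⊗ Q^y_b)Ψ] ⊗ σ`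
(after the natural reordering of tensor factors).  Then `P` is an extremal
point of `Q_finite`. -/
theorem self_testing_implies_extremal
    (P : Behaviour) (hP : P ∈ Qfinite)
    (dA' dB' : ℕ) (hdA' : 0 < dA') (hdB' : 0 < dB')
    (ψ : Fin dA' × Fin dB' → ℂ)
    (Pm : Fin 2 → Fin 2 → Matrix (Fin dA') (Fin dA') ℂ)
    (Qm : Fin 2 → Fin 2 → Matrix (Fin dB') (Fin dB') ℂ)
    -- the canonical state is the pure state `Ψ = |ψ⟩⟨ψ|`:
    (hPmProj : ∀ x a, (Pm x a).IsHermitian ∧ Pm x a * Pm x a = Pm x a)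
    (hQmProj : ∀ y b, (Qm y b).IsHermitian ∧ Qm y b * Qm y b = Qm y b)
    -- the canonical realisation realises `P`:
    (hcanon : Realises dA' dB' (Matrix.vecMulVec ψ (star ψ)) Pm Qm P)
    -- the reduced states of `Ψ` are full-rank:
    (hfullA : (reducedA (Matrix.vecMulVec ψ (star ψ))).rank = dA')
    (hfullB : (reducedB (Matrix.vecMulVec ψ (star ψ))).rank = dB')
    -- the self-testing hypothesis:
    (hselftest : ∀ (dA dB : ℕ) (ρ : Matrix (Fin dA × Fin dB) (Fin dA × Fin dB) ℂ)
      (E : Fin 2 → Fin 2 → Matrix (Fin dA) (Fin dA) ℂ)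
      (F : Fin 2 → Fin 2 → Matrix (Fin dB) (Fin dB) ℂ),
      Realises dA dB ρ E F P →
      ∃ (dA'' dB'' : ℕ)
        (VA : Matrix (Fin dA' × Fin dA'') (Fin dA) ℂ)
        (VB : Matrix (Fin dB' × Fin dB'') (Fin dB) ℂ)
        (σ : Matrix (Fin dA'' × Fin dB'') (Fin dA'' × Fin dB'') ℂ),
        VAᴴ * VA = 1 ∧ VBᴴ * VB = 1 ∧ σ.PosSemidef ∧ σ.trace = 1 ∧
        ∀ a b x y,
          Matrix.reindex (reorder dA' dA'' dB' dB'') (reorder dA' dA'' dB' dB'')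
              ((VA ⊗ₖ VB) * ((E x a ⊗ₖ F y b) * ρ) * (VA ⊗ₖ VB)ᴴ)
            = ((Pm x a ⊗ₖ Qm y b) * Matrix.vecMulVec ψ (star ψ)) ⊗ₖ σ) :
    -- conclusion: `P` is extremal in `Q_finite`
    ∀ (q0 q1 : ℝ), q0 ∈ Set.Ioo (0 : ℝ) 1 → q1 ∈ Set.Ioo (0 : ℝ) 1 →
      q0 + q1 = 1 → ∀ P0 P1 : Behaviour, P0 ∈ Qfinite → P1 ∈ Qfinite →
      P = q0 • P0 + q1 • P1 → P0 = P ∧ P1 = P :=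
  self_testing_implies_extremal_general P dA' dB' ψ Pm Qm hcanon hselftest
end

section
/- Let d be a positive integer and let A₀, A₁, A₂, B₀, B₁, B₂ ∈ M_d(ℂ) be Hermitian matrices satisfying A_x² = I and B_y² = I for all x,y ∈ {0,1,2} and A_xB_y = B_yA_x for all x,y. Define W := A₀(B₀ + B₁ + B₂) + A₁(B₀ + B₁ − B₂) + A₂(B₀ − B₁), V₁ := A₀ + A₁ − B₀ − B₁, V₂ := A₀ − A₁ − B₂, V₃ := A₂ − B₀ + B₁. Then 5·I − W = (1/2)(V₁†V₁ + V₂†V₂ + V₃†V₃); in particular W ≤ 5·I in the positive semidefinite order. -/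
open Matrix Kronecker ComplexOrder

/-- In any ring, for commuting involutions `A x`, `B y` the cross terms `A 0 A 1 + A 1 A 0` and
`B 0 B 1 + B 1 B 0` cancel between the squares, leaving `10 - 2 W`. -/
theorem i3322_sos_of_commute_of_mul_self_eq_one {R : Type*} [Ring R] (A B : Fin 3 → R)
    (hA2 : ∀ x, A x * A x = 1) (hB2 : ∀ y, B y * B y = 1)
    (hcomm : ∀ x y, Commute (A x) (B y)) :
    (A 0 + A 1 - B 0 - B 1) * (A 0 + A 1 - B 0 - B 1)
        + (A 0 - A 1 - B 2) * (A 0 - A 1 - B 2) + (A 2 - B 0 + B 1) * (A 2 - B 0 + B 1)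
      = 2 * (5 - (A 0 * (B 0 + B 1 + B 2) + A 1 * (B 0 + B 1 - B 2) + A 2 * (B 0 - B 1))) := by
  simp only [mul_add, add_mul, mul_sub, sub_mul, hA2, hB2, fun x y => (hcomm x y).eq]
  noncomm_ring
  norm_num
  abel

theorem i3322_sos_general (d : ℕ)
    (A B : Fin 3 → Matrix (Fin d) (Fin d) ℂ)
    (hA : ∀ x, (A x).IsHermitian) (hB : ∀ y, (B y).IsHermitian)
    (hA2 : ∀ x, A x * A x = 1) (hB2 : ∀ y, B y * B y = 1)
    (hcomm : ∀ x y, A x * B y = B y * A x) :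
    (5 : ℂ) • (1 : Matrix (Fin d) (Fin d) ℂ)
        - (A 0 * (B 0 + B 1 + B 2) + A 1 * (B 0 + B 1 - B 2) + A 2 * (B 0 - B 1))
      = (1 / 2 : ℂ) •
        (((A 0 + A 1 - B 0 - B 1)ᴴ * (A 0 + A 1 - B 0 - B 1))
          + ((A 0 - A 1 - B 2)ᴴ * (A 0 - A 1 - B 2))
          + ((A 2 - B 0 + B 1)ᴴ * (A 2 - B 0 + B 1))) ∧
    ((5 : ℂ) • (1 : Matrix (Fin d) (Fin d) ℂ)
        - (A 0 * (B 0 + B 1 + B 2) + A 1 * (B 0 + B 1 - B 2)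
            + A 2 * (B 0 - B 1))).PosSemidef := by
  set W := A 0 * (B 0 + B 1 + B 2) + A 1 * (B 0 + B 1 - B 2) + A 2 * (B 0 - B 1)
  have hsos : (5 : ℂ) • (1 : Matrix (Fin d) (Fin d) ℂ) - W = (1 / 2 : ℂ) •
      (((A 0 + A 1 - B 0 - B 1)ᴴ * (A 0 + A 1 - B 0 - B 1))
        + ((A 0 - A 1 - B 2)ᴴ * (A 0 - A 1 - B 2))
        + ((A 2 - B 0 + B 1)ᴴ * (A 2 - B 0 + B 1))) := by
    calc (5 : ℂ) • (1 : Matrix (Fin d) (Fin d) ℂ) - W = (1 / 2 : ℂ) • (2 * (5 - W)) := by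
          rw [two_mul, ← two_smul ℂ, smul_smul, ofNat_smul_eq_nsmul ℂ 5, nsmul_one]
          norm_num
      _ = _ := by
          simp only [conjTranspose_add, conjTranspose_sub, (hA _).eq, (hB _).eq]
          rw [i3322_sos_of_commute_of_mul_self_eq_one A B hA2 hB2 hcomm]
  refine ⟨hsos, hsos ▸ PosSemidef.smul ?_ (by positivity)⟩
  exact ((posSemidef_conjTranspose_mul_self _).add (posSemidef_conjTranspose_mul_self _)).add
    (posSemidef_conjTranspose_mul_self _)

/-- **Sum-of-squares decomposition for the correlation part of `I₃₃₂₂`.**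
If `A_x, B_y` are commuting binary observables then
`5·I − W = ½(V₁†V₁ + V₂†V₂ + V₃†V₃)`, so `W ≤ 5·I`. -/
theorem i3322_sos (d : ℕ) (hd : 0 < d)
    (A B : Fin 3 → Matrix (Fin d) (Fin d) ℂ)
    (hA : ∀ x, (A x).IsHermitian) (hB : ∀ y, (B y).IsHermitian)
    (hA2 : ∀ x, A x * A x = 1) (hB2 : ∀ y, B y * B y = 1)
    (hcomm : ∀ x y, A x * B y = B y * A x) :
    (5 : ℂ) • (1 : Matrix (Fin d) (Fin d) ℂ)
        - (A 0 * (B 0 + B 1 + B 2) + A 1 * (B 0 + B 1 - B 2) + A 2 * (B 0 - B 1))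
      = (1 / 2 : ℂ) •
        (((A 0 + A 1 - B 0 - B 1)ᴴ * (A 0 + A 1 - B 0 - B 1))
          + ((A 0 - A 1 - B 2)ᴴ * (A 0 - A 1 - B 2))
          + ((A 2 - B 0 + B 1)ᴴ * (A 2 - B 0 + B 1))) ∧
    ((5 : ℂ) • (1 : Matrix (Fin d) (Fin d) ℂ)
        - (A 0 * (B 0 + B 1 + B 2) + A 1 * (B 0 + B 1 - B 2)
            + A 2 * (B 0 - B 1))).PosSemidef :=
  i3322_sos_general d A B hA hB hA2 hB2 hcomm
end

section
/- In the bipartite Bell scenario with three binary measurements per party, consider the correlation Bell function B₆·P := ⟨A₀B₀⟩ + ⟨A₀B₁⟩ + ⟨A₀B₂⟩ + ⟨A₁B₀⟩ + ⟨A₁B₁⟩ − ⟨A₁B₂⟩ + ⟨A₂B₀⟩ − ⟨A₂B₁⟩. Then max_{P∈Q} B₆·P = 5, and for every α ∈ [0, 2π] the behaviour P_α with all marginals zero, ⟨A₀B₀⟩ = ⟨A₁B₁⟩ = (3 + cos α)/4, ⟨A₀B₁⟩ = ⟨A₁B₀⟩ = (3 − cos α)/4, ⟨A₀B₂⟩ =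 ⟨A₂B₀⟩ = 1/2, ⟨A₁B₂⟩ = ⟨A₂B₁⟩ = −1/2, ⟨A₂B₂⟩ = cos α is a quantum behaviour attaining B₆·P_α = 5. In particular the quantum face of B₆ contains a nondegenerate line segment, so the quantum maximiser of B₆ is not unique. -/
/-!
Write `A_x = E^x_0 - E^x_1` and `B_y = F^y_0 - F^y_1`. For a state `ρ`, the correlator
`⟨A_x B_y⟩` is the inner product of `u_x = A_x ⊗ 1` and `v_y = 1 ⊗ B_y` in the semi-inner
product `⟪X, Y⟫ = tr (Y ρ Xᴴ)`, and `‖u_x‖, ‖v_y‖ ≤ 1` because `1 - A_x²` and `1 - B_y²` are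
positive semidefinite. By Cauchy–Schwarz, `B₆·P ≤ ‖v₀ + v₁ + v₂‖ + ‖v₀ + v₁ - v₂‖ + ‖v₀ - v₁‖`;
two parallelogram laws bound `s = ‖v₀ + v₁ + v₂‖ + ‖v₀ + v₁ - v₂‖` and `z = ‖v₀ - v₁‖` by
`s² / 4 + z² ≤ 5`, and then `(s + z)² ≤ 5 (s² / 4 + z²) ≤ 25`. The bound passes to the closure
because `B₆` is continuous.

The value `5` is attained by qubit observables on the maximally entangled state, whose
correlators are the dot products of the Bloch vectors with the `y`-axis reflected; turning the
`y`–`z` components of the Bloch vectors of `A₀`, `A₁` and `B₂` through the angle `α` gives the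
whole family `P_α`.
-/

open Matrix Kronecker ComplexOrder BigOperators

/-- A behaviour in the bipartite Bell scenario with three binary measurements per
party: `P a b x y = P(ab|xy)` with `a, b ∈ {0,1}`, `x, y ∈ {0,1,2}`. -/
abbrev Behaviour33 : Type := Fin 2 → Fin 2 → Fin 3 → Fin 3 → ℝ

/-- `P` admits a quantum realisation of local dimension `d`. -/
def HasRealisation33 (d : ℕ) (P : Behaviour33) : Prop :=
  ∃ (ρ : Matrix (Fin d × Fin d) (Fin d × Fin d) ℂ)
    (E F : Fin 3 → Fin 2 → Matrix (Fin d) (Fin d) ℂ),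
    ρ.PosSemidef ∧ ρ.trace = 1 ∧
    (∀ x a, (E x a).PosSemidef) ∧ (∀ y b, (F y b).PosSemidef) ∧
    (∀ x, ∑ a : Fin 2, E x a = 1) ∧ (∀ y, ∑ b : Fin 2, F y b = 1) ∧
    ∀ a b x y, (P a b x y : ℂ) = ((E x a ⊗ₖ F y b) * ρ).trace

/-- The quantum set in the 3-setting bipartite scenario. -/
def Q33 : Set Behaviour33 := closure {P | ∃ d : ℕ, 0 < d ∧ HasRealisation33 d P}

def corr33 (P : Behaviour33) (x y : Fin 3) : ℝ :=
  ∑ a : Fin 2, ∑ b : Fin 2, (-1 : ℝ) ^ ((a : ℕ) + (b : ℕ)) * P a b x y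

/-- The correlation part of the `I₃₃₂₂` Bell functional. -/
def B6val (P : Behaviour33) : ℝ :=
  corr33 P 0 0 + corr33 P 0 1 + corr33 P 0 2 + corr33 P 1 0
    + corr33 P 1 1 - corr33 P 1 2 + corr33 P 2 0 - corr33 P 2 1

/-- A behaviour with vanishing marginals, built from its correlators. -/
noncomputable def fromCorr33 (c : Fin 3 → Fin 3 → ℝ) : Behaviour33 :=
  fun a b x y => (1 + (-1 : ℝ) ^ ((a : ℕ) + (b : ℕ)) * c x y) / 4

/-- The one-parameter family of maximisers of `B₆`. -/
noncomputable def Pfam (α : ℝ) : Behaviour33 :=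
  fromCorr33
    ![![(3 + Real.cos α) / 4, (3 - Real.cos α) / 4, 1 / 2],
      ![(3 - Real.cos α) / 4, (3 + Real.cos α) / 4, -(1 / 2)],
      ![1 / 2, -(1 / 2), Real.cos α]]

open scoped InnerProductSpace

namespace Matrix

theorem sub_kronecker {α l m n p : Type*} [NonUnitalNonAssocRing α] (A₁ A₂ : Matrix l m α)
    (B : Matrix n p α) : (A₁ - A₂) ⊗ₖ B = A₁ ⊗ₖ B - A₂ ⊗ₖ B := by
  ext; simp [sub_mul]

theorem kronecker_sub {α l m n p : Type*} [NonUnitalNonAssocRing α] (A : Matrix l m α)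
    (B₁ B₂ : Matrix n p α) : A ⊗ₖ (B₁ - B₂) = A ⊗ₖ B₁ - A ⊗ₖ B₂ := by
  ext; simp [mul_sub]

section PosSemidef

variable {𝕜 n m : Type*} [RCLike 𝕜] [Fintype n] [Fintype m]

theorem PosSemidef.trace_mul_nonneg {A ρ : Matrix n n 𝕜} (hA : A.PosSemidef)
    (hρ : ρ.PosSemidef) : 0 ≤ (A * ρ).trace := by
  classical
  open scoped MatrixOrder in
  obtain ⟨S, rfl⟩ := CStarAlgebra.nonneg_iff_eq_star_mul_self.mp hρ.nonneg
  rw [star_eq_conjTranspose, ← Matrix.mul_assoc, trace_mul_comm, ← Matrix.mul_assoc]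
  exact (hA.mul_mul_conjTranspose_same S).trace_nonneg

theorem PosSemidef.re_trace_mul_mul_conjTranspose_le [DecidableEq n] {X ρ : Matrix n n 𝕜}
    (hX : (1 - Xᴴ * X).PosSemidef) (hρ : ρ.PosSemidef) :
    RCLike.re (X * ρ * Xᴴ).trace ≤ RCLike.re ρ.trace := by
  have h := (RCLike.nonneg_iff.mp (hX.trace_mul_nonneg hρ)).1
  rw [Matrix.sub_mul, Matrix.one_mul, trace_sub, map_sub] at h
  rw [trace_mul_cycle]
  linarith

theorem PosSemidef.one_sub_sub_mul_sub [DecidableEq n] {P Q : Matrix n n 𝕜} (hP : P.PosSemidef)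
    (hQ : Q.PosSemidef) (hPQ : P + Q = 1) : (1 - (P - Q) * (P - Q)).PosSemidef := by
  have key : 1 - (P - Q) * (P - Q) = (4 : 𝕜) • (Pᴴ * Q * P + Qᴴ * P * Q) := by
    rw [hP.isHermitian.eq, hQ.isHermitian.eq, eq_sub_of_add_eq' hPQ,
      show (4 : 𝕜) = ((4 : ℤ) : 𝕜) by norm_num, Int.cast_smul_eq_zsmul]
    noncomm_ring
  rw [key]
  exact ((hQ.conjTranspose_mul_mul_same P).add (hP.conjTranspose_mul_mul_same Q)).smul
    (by norm_num)

theorem PosSemidef.one_sub_kronecker_one [DecidableEq n] [DecidableEq m] {A : Matrix n n 𝕜}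
    (hA : (1 - Aᴴ * A).PosSemidef) :
    (1 - (A ⊗ₖ (1 : Matrix m m 𝕜))ᴴ * (A ⊗ₖ 1)).PosSemidef := by
  rw [conjTranspose_kronecker, conjTranspose_one, ← mul_kronecker_mul, Matrix.one_mul,
    ← one_kronecker_one, ← sub_kronecker]
  exact hA.kronecker .one

theorem PosSemidef.one_sub_one_kronecker [DecidableEq n] [DecidableEq m] {B : Matrix m m 𝕜}
    (hB : (1 - Bᴴ * B).PosSemidef) :
    (1 - ((1 : Matrix n n 𝕜) ⊗ₖ B)ᴴ * (1 ⊗ₖ B)).PosSemidef := by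
  rw [conjTranspose_kronecker, conjTranspose_one, ← mul_kronecker_mul, Matrix.one_mul,
    ← one_kronecker_one, ← kronecker_sub]
  exact PosSemidef.one.kronecker hB

end PosSemidef

section outcomeProjection

variable {n m : Type*} [DecidableEq n] [DecidableEq m]

noncomputable def outcomeProjection (A : Matrix n n ℂ) (a : Fin 2) : Matrix n n ℂ :=
  (2⁻¹ : ℂ) • (1 + (-1 : ℂ) ^ (a : ℕ) • A)

theorem sum_outcomeProjection (A : Matrix n n ℂ) : ∑ a, outcomeProjection A a = 1 := by
  simp only [outcomeProjection, Fin.sum_univ_two]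
  norm_num
  module

theorem posSemidef_outcomeProjection [Fintype n] {A : Matrix n n ℂ} (hA : Aᴴ = A)
    (hA₂ : A * A = 1) (a : Fin 2) : (outcomeProjection A a).PosSemidef := by
  have hs : star ((-1 : ℂ) ^ (a : ℕ)) = (-1) ^ (a : ℕ) := by simp
  have hs₂ : (-1 : ℂ) ^ (a : ℕ) * (-1) ^ (a : ℕ) = 1 := by rw [← mul_pow]; simp
  unfold outcomeProjection
  generalize (-1 : ℂ) ^ (a : ℕ) = s at hs hs₂ ⊢
  set M := (2⁻¹ : ℂ) • (1 + s • A)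
  have h_herm : Mᴴ = M := by simp [M, conjTranspose_smul, hA, hs]
  have h_idem : M * M = M := by
    simp only [M, smul_mul_smul_comm, add_mul, mul_add, Matrix.one_mul, Matrix.mul_one, hA₂,
      hs₂, one_smul]
    module
  rw [← h_idem]
  nth_rewrite 1 [← h_herm]
  exact posSemidef_conjTranspose_mul_self M

theorem trace_outcomeProjection_kronecker_mul [Fintype n] [Fintype m] (A : Matrix n n ℂ)
    (B : Matrix m m ℂ) (ρ : Matrix (n × m) (n × m) ℂ) (a b : Fin 2) :
    ((outcomeProjection A a ⊗ₖ outcomeProjection B b) * ρ).trace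
      = (ρ.trace + (-1) ^ (a : ℕ) * ((A ⊗ₖ 1) * ρ).trace + (-1) ^ (b : ℕ) * ((1 ⊗ₖ B) * ρ).trace
        + (-1) ^ ((a : ℕ) + (b : ℕ)) * ((A ⊗ₖ B) * ρ).trace) / 4 := by
  simp only [outcomeProjection, smul_kronecker, kronecker_smul, add_kronecker, kronecker_add,
    one_kronecker_one, Matrix.smul_mul, Matrix.add_mul, trace_add, trace_smul, smul_eq_mul,
    Matrix.one_mul, smul_smul]
  ring

end outcomeProjection

end Matrix

theorem add_add_le_five_of_sq_le {x y z a : ℝ} (hxy : x ^ 2 + y ^ 2 ≤ 2 * a ^ 2 + 2)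
    (hz : z ^ 2 ≤ 4 - a ^ 2) : x + y + z ≤ 5 := by
  nlinarith [sq_nonneg (x - y), sq_nonneg (x + y - 4 * z), sq_nonneg (x + y + z - 5)]

theorem norm_add_add_add_norm_add_sub_add_norm_sub_le_five {E : Type*}
    [SeminormedAddCommGroup E] [InnerProductSpace ℝ E] {v₀ v₁ v₂ : E}
    (h₀ : ‖v₀‖ ≤ 1) (h₁ : ‖v₁‖ ≤ 1) (h₂ : ‖v₂‖ ≤ 1) :
    ‖v₀ + v₁ + v₂‖ + ‖v₀ + v₁ - v₂‖ + ‖v₀ - v₁‖ ≤ 5 := by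
  have par₁ := parallelogram_law_with_norm ℝ (v₀ + v₁) v₂
  have par₂ := parallelogram_law_with_norm ℝ v₀ v₁
  refine add_add_le_five_of_sq_le (a := ‖v₀ + v₁‖) ?_ ?_
  · nlinarith [norm_nonneg v₂]
  · nlinarith [norm_nonneg v₀, norm_nonneg v₁]

theorem re_inner_B6_le_five {𝕜 E : Type*} [RCLike 𝕜] [SeminormedAddCommGroup E]
    [InnerProductSpace 𝕜 E] {u v : Fin 3 → E} (hu : ∀ x, ‖u x‖ ≤ 1) (hv : ∀ y, ‖v y‖ ≤ 1) :
    RCLike.re ⟪u 0, v 0 + v 1 + v 2⟫_𝕜 + RCLike.re ⟪u 1, v 0 + v 1 - v 2⟫_𝕜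
      + RCLike.re ⟪u 2, v 0 - v 1⟫_𝕜 ≤ 5 := by
  have cauchy_schwarz : ∀ x w, RCLike.re ⟪u x, w⟫_𝕜 ≤ ‖w‖ := fun x w =>
    (re_inner_le_norm _ _).trans (mul_le_of_le_one_left (norm_nonneg _) (hu x))
  let := InnerProductSpace.rclikeToReal 𝕜 E
  linarith [cauchy_schwarz 0 (v 0 + v 1 + v 2), cauchy_schwarz 1 (v 0 + v 1 - v 2),
    cauchy_schwarz 2 (v 0 - v 1),
    norm_add_add_add_norm_add_sub_add_norm_sub_le_five (hv 0) (hv 1) (hv 2)]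

theorem corr33_eq_trace {d : ℕ} {P : Behaviour33} {ρ : Matrix (Fin d × Fin d) (Fin d × Fin d) ℂ}
    {E F : Fin 3 → Fin 2 → Matrix (Fin d) (Fin d) ℂ}
    (hP : ∀ a b x y, (P a b x y : ℂ) = ((E x a ⊗ₖ F y b) * ρ).trace) (x y : Fin 3) :
    (corr33 P x y : ℂ) = (((E x 0 - E x 1) ⊗ₖ (F y 0 - F y 1)) * ρ).trace := by
  rw [corr33]
  push_cast
  simp only [Fin.sum_univ_two, hP, sub_kronecker, kronecker_sub, Matrix.sub_mul, trace_sub]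
  norm_num
  ring

theorem HasRealisation33.B6val_le_five {d : ℕ} {P : Behaviour33} (h : HasRealisation33 d P) :
    B6val P ≤ 5 := by
  obtain ⟨ρ, E, F, hρ, hρtr, hE, hF, hEsum, hFsum, hP⟩ := h
  set A : Fin 3 → Matrix (Fin d) (Fin d) ℂ := fun x => E x 0 - E x 1
  set B : Fin 3 → Matrix (Fin d) (Fin d) ℂ := fun y => F y 0 - F y 1
  have hA : ∀ x, (A x)ᴴ = A x := fun x => ((hE x 0).isHermitian.sub (hE x 1).isHermitian).eq
  have hB : ∀ y, (B y)ᴴ = B y := fun y => ((hF y 0).isHermitian.sub (hF y 1).isHermitian).eq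
  have hA₁ : ∀ x, (1 - (A x)ᴴ * A x).PosSemidef := fun x => by
    rw [hA]; exact (hE x 0).one_sub_sub_mul_sub (hE x 1) (by simpa using hEsum x)
  have hB₁ : ∀ y, (1 - (B y)ᴴ * B y).PosSemidef := fun y => by
    rw [hB]; exact (hF y 0).one_sub_sub_mul_sub (hF y 1) (by simpa using hFsum y)
  let := ρ.toMatrixSeminormedAddCommGroup hρ
  let := ρ.toMatrixInnerProductSpace hρ
  let u : Fin 3 → Matrix (Fin d × Fin d) (Fin d × Fin d) ℂ := fun x => A x ⊗ₖ 1
  let v : Fin 3 → Matrix (Fin d × Fin d) (Fin d × Fin d) ℂ := fun y => 1 ⊗ₖ B y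
  have norm_le : ∀ X : Matrix (Fin d × Fin d) (Fin d × Fin d) ℂ,
      (1 - Xᴴ * X).PosSemidef → ‖X‖ ≤ 1 := fun X hX => by
    have h : ‖X‖ ^ 2 = RCLike.re (X * ρ * Xᴴ).trace := by rw [@norm_sq_eq_re_inner ℂ]; rfl
    have := hX.re_trace_mul_mul_conjTranspose_le hρ
    rw [hρtr, ← h, RCLike.one_re] at this
    exact (sq_le_one_iff₀ (norm_nonneg X)).mp this
  have hcorr : ∀ x y, corr33 P x y = (⟪u x, v y⟫_ℂ).re := fun x y => by
    change _ = ((1 ⊗ₖ B y) * ρ * (A x ⊗ₖ 1)ᴴ).trace.re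
    rw [← Complex.ofReal_re (corr33 P x y), corr33_eq_trace hP, trace_mul_cycle,
      conjTranspose_kronecker, conjTranspose_one, hA, ← mul_kronecker_mul, Matrix.one_mul,
      Matrix.mul_one]
  have := re_inner_B6_le_five (𝕜 := ℂ) (u := u) (v := v)
    (fun x => norm_le _ (hA₁ x).one_sub_kronecker_one)
    (fun y => norm_le _ (hB₁ y).one_sub_one_kronecker)
  simp only [inner_add_right, inner_sub_right, RCLike.re_to_complex, Complex.add_re,
    Complex.sub_re] at this
  simp only [B6val, hcorr]
  linarith

theorem continuous_B6val : Continuous B6val := by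
  unfold B6val corr33
  fun_prop

theorem B6val_le_five_of_mem_Q33 {P : Behaviour33} (hP : P ∈ Q33) : B6val P ≤ 5 := by
  refine closure_minimal ?_ (isClosed_le continuous_B6val continuous_const) hP
  rintro _ ⟨d, -, h⟩
  exact h.B6val_le_five

theorem hasRealisation33_fromCorr33 {d : ℕ} {ρ : Matrix (Fin d × Fin d) (Fin d × Fin d) ℂ}
    (hρ : ρ.PosSemidef) (hρtr : ρ.trace = 1) {A B : Fin 3 → Matrix (Fin d) (Fin d) ℂ}
    (hA : ∀ x, (A x)ᴴ = A x) (hA₂ : ∀ x, A x * A x = 1)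
    (hB : ∀ y, (B y)ᴴ = B y) (hB₂ : ∀ y, B y * B y = 1)
    (hA₀ : ∀ x, ((A x ⊗ₖ 1) * ρ).trace = 0) (hB₀ : ∀ y, ((1 ⊗ₖ B y) * ρ).trace = 0)
    {c : Fin 3 → Fin 3 → ℝ} (hc : ∀ x y, ((A x ⊗ₖ B y) * ρ).trace = c x y) :
    HasRealisation33 d (fromCorr33 c) := by
  refine ⟨ρ, fun x => outcomeProjection (A x), fun y => outcomeProjection (B y), hρ, hρtr,
    fun x => posSemidef_outcomeProjection (hA x) (hA₂ x),
    fun y => posSemidef_outcomeProjection (hB y) (hB₂ y),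
    fun x => sum_outcomeProjection (A x), fun y => sum_outcomeProjection (B y), ?_⟩
  intro a b x y
  rw [trace_outcomeProjection_kronecker_mul, hρtr, hA₀, hB₀, hc, fromCorr33]
  push_cast
  ring

noncomputable def blochObservable (v : Fin 3 → ℝ) : Matrix (Fin 2) (Fin 2) ℂ :=
  !![(v 2 : ℂ), v 0 - v 1 * Complex.I; v 0 + v 1 * Complex.I, -(v 2 : ℂ)]

theorem blochObservable_conjTranspose (v : Fin 3 → ℝ) :
    (blochObservable v)ᴴ = blochObservable v := by
  ext i j
  fin_cases i <;> fin_cases j <;> simp [blochObservable, Complex.ext_iff]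

theorem blochObservable_mul_self {v : Fin 3 → ℝ} (hv : v 0 ^ 2 + v 1 ^ 2 + v 2 ^ 2 = 1) :
    blochObservable v * blochObservable v = 1 := by
  have hv' : (v 0 : ℂ) ^ 2 + (v 1 : ℂ) ^ 2 + (v 2 : ℂ) ^ 2 = 1 := by exact_mod_cast hv
  ext i j
  fin_cases i <;> fin_cases j <;> simp [blochObservable, Matrix.mul_apply, Fin.sum_univ_two]
  · linear_combination hv' - (v 1 : ℂ) ^ 2 * Complex.I_sq
  · ring
  · ring
  · linear_combination hv' - (v 1 : ℂ) ^ 2 * Complex.I_sq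

noncomputable def bellState : Matrix (Fin 2 × Fin 2) (Fin 2 × Fin 2) ℂ :=
  (2⁻¹ : ℂ) • vecMulVec (fun p => if p.1 = p.2 then 1 else 0)
    (star fun p => if p.1 = p.2 then 1 else 0)

theorem posSemidef_bellState : bellState.PosSemidef :=
  (posSemidef_vecMulVec_self_star _).smul (by simp)

theorem trace_bellState : bellState.trace = 1 := by
  simp [bellState, trace, vecMulVec_apply, Fintype.sum_prod_type]

theorem trace_kronecker_mul_bellState (M N : Matrix (Fin 2) (Fin 2) ℂ) :
    ((M ⊗ₖ N) * bellState).trace = (∑ i, ∑ j, M i j * N i j) / 2 := by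
  simp [bellState, trace, Matrix.mul_apply, vecMulVec_apply, Fintype.sum_prod_type,
    Fin.sum_univ_two]
  ring

-- The middle sign comes from `σ_yᵀ = -σ_y` in `trace_kronecker_mul_bellState`.
theorem trace_blochObservable_kronecker_mul_bellState (v w : Fin 3 → ℝ) :
    ((blochObservable v ⊗ₖ blochObservable w) * bellState).trace
      = ((v 0 * w 0 - v 1 * w 1 + v 2 * w 2 : ℝ) : ℂ) := by
  rw [trace_kronecker_mul_bellState]
  simp [blochObservable, Fin.sum_univ_two]
  ring_nf
  rw [Complex.I_sq]
  ring

theorem trace_blochObservable_kronecker_one_mul_bellState (v : Fin 3 → ℝ) :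
    ((blochObservable v ⊗ₖ 1) * bellState).trace = 0 := by
  simp [trace_kronecker_mul_bellState, blochObservable, Fin.sum_univ_two]

theorem trace_one_kronecker_blochObservable_mul_bellState (w : Fin 3 → ℝ) :
    ((1 ⊗ₖ blochObservable w) * bellState).trace = 0 := by
  simp [trace_kronecker_mul_bellState, blochObservable, Fin.sum_univ_two]

noncomputable def pfamAliceBloch (α : ℝ) : Fin 3 → Fin 3 → ℝ :=
  ![![√3 / 2, Real.cos α / 2, Real.sin α / 2],
    ![√3 / 2, -(Real.cos α / 2), -(Real.sin α / 2)],
    ![0, 1, 0]]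

noncomputable def pfamBobBloch (α : ℝ) : Fin 3 → Fin 3 → ℝ :=
  ![![√3 / 2, -(1 / 2), 0],
    ![√3 / 2, 1 / 2, 0],
    ![0, -Real.cos α, Real.sin α]]

theorem hasRealisation33_pfam (α : ℝ) : HasRealisation33 2 (Pfam α) := by
  have h3 : √3 ^ 2 = 3 := Real.sq_sqrt (by norm_num)
  have hsc := Real.sin_sq_add_cos_sq α
  have unit_alice : ∀ x, pfamAliceBloch α x 0 ^ 2 + pfamAliceBloch α x 1 ^ 2
      + pfamAliceBloch α x 2 ^ 2 = 1 := by
    intro x; fin_cases x <;> simp [pfamAliceBloch] <;> nlinarith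
  have unit_bob : ∀ y, pfamBobBloch α y 0 ^ 2 + pfamBobBloch α y 1 ^ 2
      + pfamBobBloch α y 2 ^ 2 = 1 := by
    intro y; fin_cases y <;> simp [pfamBobBloch] <;> nlinarith
  refine hasRealisation33_fromCorr33 posSemidef_bellState trace_bellState
    (fun x => blochObservable_conjTranspose _) (fun x => blochObservable_mul_self (unit_alice x))
    (fun y => blochObservable_conjTranspose _) (fun y => blochObservable_mul_self (unit_bob y))
    (fun x => trace_blochObservable_kronecker_one_mul_bellState _)
    (fun y => trace_one_kronecker_blochObservable_mul_bellState _) ?_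
  intro x y
  rw [trace_blochObservable_kronecker_mul_bellState, Complex.ofReal_inj]
  fin_cases x <;> fin_cases y <;> simp [pfamAliceBloch, pfamBobBloch] <;> nlinarith

theorem pfam_mem_Q33 (α : ℝ) : Pfam α ∈ Q33 :=
  subset_closure ⟨2, two_pos, hasRealisation33_pfam α⟩

theorem corr33_fromCorr33 (c : Fin 3 → Fin 3 → ℝ) (x y : Fin 3) :
    corr33 (fromCorr33 c) x y = c x y := by
  simp [corr33, fromCorr33, Fin.sum_univ_two]
  ring

theorem B6val_pfam (α : ℝ) : B6val (Pfam α) = 5 := by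
  simp [B6val, Pfam, corr33_fromCorr33]
  ring

/-- **The quantum maximiser of `B₆` is not unique:** `β_Q(B₆) = 5` and the whole
one-parameter family `P_α` consists of quantum behaviours attaining the value `5`;
in particular the quantum face contains a nondegenerate segment. -/
theorem b6_nonunique_maximiser :
    sSup (B6val '' Q33) = 5 ∧
    (∀ α ∈ Set.Icc (0 : ℝ) (2 * Real.pi), Pfam α ∈ Q33 ∧ B6val (Pfam α) = 5) ∧
    Pfam 0 ≠ Pfam Real.pi := by
  refine ⟨IsGreatest.csSup_eq ⟨⟨Pfam 0, pfam_mem_Q33 0, B6val_pfam 0⟩, ?_⟩,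
    fun α _ => ⟨pfam_mem_Q33 α, B6val_pfam α⟩, fun h => ?_⟩
  · rintro _ ⟨P, hP, rfl⟩
    exact B6val_le_five_of_mem_Q33 hP
  · have h22 := congrArg (corr33 · 2 2) h
    simp [Pfam, corr33_fromCorr33] at h22
    norm_num at h22
end
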